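/- Repeated squaring of R = I + A stabilizes: the sequence R, R^2, R^4, R^8, … of an n×n boolean matrix is eventually constant, and its limit (the first repeated value) equals the reflexive-transitive closure ∑_{k=0}^∞ A^k. Moreover stabilization occurs after at most ⌈log₂ n⌉ + 1 squarings. -/
import Mathlib


/-- Boolean matrix addition: entrywise OR. -/
def bAdd {m n : ℕ} (A B : Matrix (Fin m) (Fin n) Prop) : Matrix (Fin m) (Fin n) Prop :=
  Matrix.of fun i j => A i j ∨ B i j

/-- Boolean matrix multiplication: (AB)_{ij} = ⋁_k A_{ik} ∧ B_{kj}. -/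
def bMul {m n p : ℕ} (A : Matrix (Fin m) (Fin n) Prop) (B : Matrix (Fin n) (Fin p) Prop) :
    Matrix (Fin m) (Fin p) Prop :=
  Matrix.of fun i j => ∃ k, A i k ∧ B k j

/-- Identity boolean matrix. -/
def bId (n : ℕ) : Matrix (Fin n) (Fin n) Prop := Matrix.of fun i j => i = j

/-- Boolean matrix power, A^0 = I. -/
def bPow {n : ℕ} (A : Matrix (Fin n) (Fin n) Prop) : ℕ → Matrix (Fin n) (Fin n) Prop
  | 0 => bId n
  | k + 1 => bMul A (bPow A k)

/-- ∑_{k=0}^{∞} A^k : reflexive-transitive closure. -/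
def bClosure {n : ℕ} (A : Matrix (Fin n) (Fin n) Prop) : Matrix (Fin n) (Fin n) Prop :=
  Matrix.of fun i j => ∃ k, bPow A k i j

/-- ∑_{k=1}^{∞} A^k : transitive closure. -/
def bTC {n : ℕ} (A : Matrix (Fin n) (Fin n) Prop) : Matrix (Fin n) (Fin n) Prop :=
  Matrix.of fun i j => ∃ k, 0 < k ∧ bPow A k i j

/-- Entrywise order on boolean matrices. -/
def bLe {m n : ℕ} (A B : Matrix (Fin m) (Fin n) Prop) : Prop := ∀ i j, A i j → B i j

lemma bMul_apply {m n p : ℕ} (A : Matrix (Fin m) (Fin n) Prop) (B : Matrix (Fin n) (Fin p) Prop)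
    (i j) : bMul A B i j ↔ ∃ k, A i k ∧ B k j := Iff.rfl

lemma bPow_succ {n : ℕ} (A : Matrix (Fin n) (Fin n) Prop) (k : ℕ) :
    bPow A (k + 1) = bMul A (bPow A k) := rfl

lemma bMul_assoc {m n p q : ℕ} (A : Matrix (Fin m) (Fin n) Prop)
    (B : Matrix (Fin n) (Fin p) Prop) (C : Matrix (Fin p) (Fin q) Prop) :
    bMul (bMul A B) C = bMul A (bMul B C) := by
  funext i j
  apply propext
  constructor
  · rintro ⟨k, ⟨l, hal, hbl⟩, hc⟩; exact ⟨l, hal, k, hbl, hc⟩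
  · rintro ⟨l, hal, k, hbl, hc⟩; exact ⟨k, ⟨l, hal, hbl⟩, hc⟩

lemma bId_mul {n p : ℕ} (B : Matrix (Fin n) (Fin p) Prop) : bMul (bId n) B = B := by
  funext i j
  apply propext
  constructor
  · rintro ⟨k, (rfl : i = k), h⟩; exact h
  · intro h; exact ⟨i, rfl, h⟩

lemma bPow_add {n : ℕ} (A : Matrix (Fin n) (Fin n) Prop) (a b : ℕ) :
    bPow A (a + b) = bMul (bPow A a) (bPow A b) := by
  induction a with
  | zero => rw [Nat.zero_add]; exact (bId_mul _).symm
  | succ a ih =>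
      have h : a + 1 + b = (a + b) + 1 := by omega
      rw [h, bPow_succ, ih, bPow_succ, bMul_assoc]

lemma powR_iff {n : ℕ} (A : Matrix (Fin n) (Fin n) Prop) (m : ℕ) (i j : Fin n) :
    bPow (bAdd (bId n) A) m i j ↔ ∃ l, l ≤ m ∧ bPow A l i j := by
  induction m generalizing i with
  | zero =>
      constructor
      · intro h; exact ⟨0, le_refl 0, h⟩
      · rintro ⟨l, hl, h⟩
        have : l = 0 := Nat.le_zero.mp hl
        subst this; exact h
  | succ m ih =>
      constructor
      · rintro ⟨k, hR, hrest⟩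
        rcases (hR : i = k ∨ A i k) with rfl | hA
        · obtain ⟨l, hl, h⟩ := (ih _).mp hrest
          exact ⟨l, Nat.le_succ_of_le hl, h⟩
        · obtain ⟨l, hl, h⟩ := (ih k).mp hrest
          exact ⟨l + 1, Nat.succ_le_succ hl, ⟨k, hA, h⟩⟩
      · rintro ⟨l, hl, h⟩
        cases l with
        | zero => exact ⟨i, Or.inl rfl, (ih i).mpr ⟨0, Nat.zero_le _, h⟩⟩
        | succ l =>
            obtain ⟨k, hA, h⟩ := (h : ∃ k, A i k ∧ bPow A l k j)
            exact ⟨k, Or.inr hA, (ih k).mpr ⟨l, by omega, h⟩⟩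

lemma pow_iff_walk {n : ℕ} (A : Matrix (Fin n) (Fin n) Prop) (l : ℕ) (i j : Fin n) :
    bPow A l i j ↔ ∃ f : ℕ → Fin n, f 0 = i ∧ f l = j ∧ ∀ t < l, A (f t) (f (t + 1)) := by
  induction l generalizing i with
  | zero =>
      constructor
      · intro h
        exact ⟨fun _ => i, rfl, ((h : i = j) ▸ rfl), fun t ht => absurd ht (Nat.not_lt_zero t)⟩
      · rintro ⟨f, hf0, hfl, _⟩
        show i = j
        rw [← hf0, hfl]
  | succ l ih =>
      constructor
      · rintro ⟨k, hik, hrest⟩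
        obtain ⟨f, hf0, hfl, hstep⟩ := (ih k).mp hrest
        refine ⟨fun t => match t with | 0 => i | t + 1 => f t, rfl, hfl, ?_⟩
        intro t ht
        match t with
        | 0 => show A i (f 0); rw [hf0]; exact hik
        | t + 1 => exact hstep t (by omega)
      · rintro ⟨f, hf0, hfl, hstep⟩
        refine ⟨f 1, ?_, (ih (f 1)).mpr ⟨fun t => f (t + 1), rfl, hfl, fun t ht => hstep (t + 1) (by omega)⟩⟩
        have := hstep 0 (by omega)
        rwa [hf0] at this

lemma shorten {n : ℕ} (A : Matrix (Fin n) (Fin n) Prop) :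
    ∀ l (i j : Fin n), bPow A l i j → ∃ l', l' < n ∧ bPow A l' i j := by
  intro l
  induction l using Nat.strong_induction_on with
  | _ l ihl =>
    intro i j h
    by_cases hl : l < n
    · exact ⟨l, hl, h⟩
    · push_neg at hl
      obtain ⟨f, hf0, hfl, hstep⟩ := (pow_iff_walk A l i j).mp h
      have hni : ¬ Function.Injective (fun t : Fin (l + 1) => f t) := by
        intro hinj
        have := Fintype.card_le_of_injective _ hinj
        simp only [Fintype.card_fin] at this
        omega
      obtain ⟨t1, t2, hft, hne⟩ := Function.not_injective_iff.mp hni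
      -- get a < b ≤ l with f a = f b
      obtain ⟨a, b, hab, hbl, hfab⟩ :
          ∃ a b : ℕ, a < b ∧ b ≤ l ∧ f a = f b := by
        rcases Nat.lt_or_ge (t1 : ℕ) (t2 : ℕ) with hlt | hge
        · exact ⟨t1, t2, hlt, Nat.lt_succ_iff.mp t2.isLt, hft⟩
        · have hlt : (t2 : ℕ) < (t1 : ℕ) := by
            rcases Nat.lt_or_ge (t2 : ℕ) (t1 : ℕ) with h' | h'
            · exact h'
            · exact absurd (Fin.ext (le_antisymm hge h')) (Ne.symm hne)
          exact ⟨t2, t1, hlt, Nat.lt_succ_iff.mp t1.isLt, hft.symm⟩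
      set d := b - a with hd
      set l' := l - d with hl'
      have hdpos : 0 < d := by omega
      have hl'lt : l' < l := by omega
      have hal' : a ≤ l' := by omega
      have hwalk : bPow A l' i j := by
        refine (pow_iff_walk A l' i j).mpr ⟨fun t => if t ≤ a then f t else f (t + d), ?_, ?_, ?_⟩
        · beta_reduce
          rw [if_pos (Nat.zero_le a), hf0]
        · by_cases hc : l' ≤ a
          · have ha : a = l' := le_antisymm hal' hc
            have hbeq : b = l := by omega
            beta_reduce
            rw [if_pos hc, ← ha, hfab, hbeq, hfl]
          · beta_reduce
            rw [if_neg hc]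
            have h3 : l' + d = l := by omega
            rw [h3, hfl]
        · intro t ht
          beta_reduce
          by_cases h1 : t + 1 ≤ a
          · rw [if_pos (Nat.le_of_succ_le h1), if_pos h1]
            exact hstep t (by omega)
          · by_cases h2 : t ≤ a
            · have hta : t = a := by omega
              rw [if_pos h2, if_neg h1, hta, hfab]
              have h3 : a + 1 + d = b + 1 := by omega
              rw [h3]
              exact hstep b (by omega)
            · rw [if_neg h2, if_neg h1]
              have h3 : t + 1 + d = t + d + 1 := by omega
              rw [h3]
              exact hstep (t + d) (by omega)
      exact ihl l' hl'lt i j hwalk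

lemma closure_eq_powR {n : ℕ} (A : Matrix (Fin n) (Fin n) Prop) (m : ℕ) (hm : n ≤ m + 1) :
    bPow (bAdd (bId n) A) m = bClosure A := by
  funext i j
  apply propext
  constructor
  · intro h
    obtain ⟨l, _, h⟩ := (powR_iff A m i j).mp h
    exact ⟨l, h⟩
  · rintro ⟨l, h⟩
    obtain ⟨l', hl', h'⟩ := shorten A l i j h
    exact (powR_iff A m i j).mpr ⟨l', by omega, h'⟩

/-- repeated squaring of R = I + A is eventually constant, the first repeated
value equals ∑_{k=0}^{∞} A^k, and stabilization occurs after at most ⌈log₂ n⌉ + 1 squarings. -/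
theorem bmlp_repeated_squaring_stabilizes (n : ℕ) (A : Matrix (Fin n) (Fin n) Prop) :
    (∀ k, Nat.clog 2 n + 1 ≤ k →
      bPow (bAdd (bId n) A) (2 ^ k) = bPow (bAdd (bId n) A) (2 ^ (Nat.clog 2 n + 1))) ∧
    (∀ k, bPow (bAdd (bId n) A) (2 ^ k) = bPow (bAdd (bId n) A) (2 ^ (k + 1)) →
      bPow (bAdd (bId n) A) (2 ^ k) = bClosure A) ∧
    bPow (bAdd (bId n) A) (2 ^ (Nat.clog 2 n + 1)) = bClosure A := by
  have hn : n ≤ 2 ^ Nat.clog 2 n := Nat.le_pow_clog (by norm_num) n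
  have hbig : ∀ k, Nat.clog 2 n ≤ k → bPow (bAdd (bId n) A) (2 ^ k) = bClosure A := by
    intro k hk
    apply closure_eq_powR
    have h1 : 2 ^ Nat.clog 2 n ≤ 2 ^ k := Nat.pow_le_pow_right (by norm_num) hk
    omega
  refine ⟨?_, ?_, hbig _ (by omega)⟩
  · intro k hk
    rw [hbig k (by omega), hbig _ (by omega)]
  · intro k hstab
    have step : ∀ j, k ≤ j →
        bPow (bAdd (bId n) A) (2 ^ j) = bPow (bAdd (bId n) A) (2 ^ k) := by
      intro j hj
      induction j, hj using Nat.le_induction with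
      | base => rfl
      | succ j hj ihj =>
          have h1 : (2:ℕ) ^ (j + 1) = 2 ^ j + 2 ^ j := by ring
          have h2 : (2:ℕ) ^ k + 2 ^ k = 2 ^ (k + 1) := by ring
          rw [h1, bPow_add, ihj, ← bPow_add, h2, ← hstab]
    rw [← step (max k (Nat.clog 2 n)) (le_max_left _ _), hbig _ (le_max_right _ _)]
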